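/- At the uniform (combinatorial) point η = π/8, λ = 5π/8, μ = 0, the inverse-slope function of the family of tangent lines simplifies to A(ξ) = cot(2ξ) for all ξ ∈ (0, π/4). -/
import Mathlib


open Real

/-- The inverse slope `A(ξ) = s(ξ)⁻¹` of the family of tangent lines in the Tangent
Method for the 20V model with DWBC3. -/
noncomputable def A20V (η lam mu ξ : ℝ) : ℝ :=
  (sin (ξ + lam + η) * sin (ξ + lam - η) / (sin ξ * sin (ξ + 2 * η))) *
    ((sin ξ * sin (ξ + 2 * η) +
        sin (ξ + (lam - η + mu) / 2) * sin (ξ + (lam + 3 * η + mu) / 2)) /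
      (sin (ξ + lam + η) * sin (ξ + lam - η) +
        sin (ξ + (lam - η + mu) / 2) * sin (ξ + (lam + 3 * η + mu) / 2)))

/-- At the uniform (combinatorial) point `η = π/8`, `λ = 5π/8`,
`μ = 0`, the inverse-slope function simplifies to `A(ξ) = cot(2ξ)` on `(0, π/4)`. -/
theorem A20V_combinatorial_point (ξ : ℝ) (h0 : 0 < ξ) (h1 : ξ < π / 4) :
    A20V (π / 8) (5 * π / 8) 0 ξ = cot (2 * ξ) := by
  have hpi := Real.pi_pos
  have hs : 0 < sin ξ := Real.sin_pos_of_pos_of_lt_pi h0 (by linarith)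
  have hc : 0 < cos ξ := Real.cos_pos_of_mem_Ioo ⟨by linarith, by linarith⟩
  have hsc : sin ξ < cos ξ := by
    have h1' : sin ξ < sin (π / 4) :=
      Real.strictMonoOn_sin ⟨by linarith, by linarith⟩ ⟨by linarith, by linarith⟩ h1
    have h2' : cos (π / 4) < cos ξ :=
      Real.cos_lt_cos_of_nonneg_of_le_pi (le_of_lt h0) (by linarith) h1
    rw [Real.sin_pi_div_four] at h1'
    rw [Real.cos_pi_div_four] at h2'
    linarith
  have hsqrt2 : (0:ℝ) < Real.sqrt 2 := by positivity
  -- rewrite the angle arguments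
  have e1 : ξ + 5 * π / 8 + π / 8 = ξ + 3 * (π / 4) := by ring
  have e2 : ξ + 5 * π / 8 - π / 8 = ξ + π / 2 := by ring
  have e3 : ξ + 2 * (π / 8) = ξ + π / 4 := by ring
  have e4 : ξ + (5 * π / 8 - π / 8 + 0) / 2 = ξ + π / 4 := by ring
  have e5 : ξ + (5 * π / 8 + 3 * (π / 8) + 0) / 2 = ξ + π / 2 := by ring
  have h12 : sin (ξ + π / 2) = cos ξ := by
    rw [Real.sin_add, Real.sin_pi_div_two, Real.cos_pi_div_two]; ring
  have h14 : sin (ξ + π / 4) = Real.sqrt 2 / 2 * (sin ξ + cos ξ) := by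
    rw [Real.sin_add, Real.sin_pi_div_four, Real.cos_pi_div_four]; ring
  have h34 : sin (ξ + 3 * (π / 4)) = Real.sqrt 2 / 2 * (cos ξ - sin ξ) := by
    have : ξ + 3 * (π / 4) = (ξ + π / 4) + π / 2 := by ring
    rw [this, Real.sin_add, Real.sin_pi_div_two, Real.cos_pi_div_two,
      Real.cos_add, Real.sin_pi_div_four, Real.cos_pi_div_four]
    ring
  unfold A20V
  rw [e1, e2, e3, e4, e5, h12, h14, h34]
  have hcot : cot (2 * ξ) = (cos ξ ^ 2 - sin ξ ^ 2) / (2 * sin ξ * cos ξ) := by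
    rw [Real.cot_eq_cos_div_sin, Real.sin_two_mul, Real.cos_two_mul]
    have := Real.sin_sq_add_cos_sq ξ
    rw [show (2:ℝ) * cos ξ ^ 2 - 1 = cos ξ ^ 2 - sin ξ ^ 2 by linarith]
  rw [hcot]
  have hd1 : sin ξ * (Real.sqrt 2 / 2 * (sin ξ + cos ξ)) ≠ 0 := by positivity
  have hd2 : Real.sqrt 2 / 2 * (cos ξ - sin ξ) * cos ξ +
      Real.sqrt 2 / 2 * (sin ξ + cos ξ) * cos ξ ≠ 0 := by
    have : Real.sqrt 2 / 2 * (cos ξ - sin ξ) * cos ξ +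
        Real.sqrt 2 / 2 * (sin ξ + cos ξ) * cos ξ = Real.sqrt 2 * cos ξ ^ 2 := by ring
    rw [this]; positivity
  have hs2 : sin ξ ≠ 0 := ne_of_gt hs
  have hc2 : cos ξ ≠ 0 := ne_of_gt hc
  have h2sc : 2 * sin ξ * cos ξ ≠ 0 := by positivity
  rw [div_mul_div_comm, div_eq_div_iff (mul_ne_zero hd1 hd2) h2sc]
  ring
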